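/- arXiv:2303.11150 — 6 statements merged into one kernel-verified Lean document; each statement's English description precedes it below -/
import Mathlib

section
/- If G_1, ..., G_n are independent geometric random variables with G_i ~ Geom(1 - q_i) (counting failures before success, so Pr[G_i = k] = (1-q_i) q_i^k), and q := q_1 + ... + q_n < 1, then G_1 + ... + G_n is stochastically dominated by a random variable G ~ Geom(1 - q), i.e., Pr[G_1 + ... + G_n ≥ x] ≤ Pr[G ≥ x] for all x. -/
open MeasureTheory ProbabilityTheory Finset

/-!
If `G₁ + ⋯ + Gₙ ≥ x`, then `x` splits as `k₁ + ⋯ + kₙ` with `kᵢ ≤ Gᵢ`. A union bound over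
these compositions, independence and the geometric tails `Pr[Gᵢ ≥ kᵢ] ≤ qᵢ ^ kᵢ` give
`Pr[∑ Gᵢ ≥ x] ≤ ∑_{k} ∏ᵢ qᵢ ^ kᵢ`, and the right-hand side is at most
`(∑ qᵢ) ^ x` because it is the multinomial expansion of the latter without the multinomial
coefficients.
-/

lemma exists_mem_piAntidiag_le {ι : Type*} [Fintype ι] [DecidableEq ι] {g : ι → ℕ} {x : ℕ}
    (hx : x ≤ ∑ i, g i) : ∃ k ∈ piAntidiag univ x, k ≤ g := by
  induction x with
  | zero => exact ⟨0, by simp, fun i => Nat.zero_le _⟩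
  | succ x ih =>
    obtain ⟨k, hk_mem, hk_le⟩ := ih (Nat.le_of_succ_le hx)
    rw [mem_piAntidiag] at hk_mem
    obtain ⟨i, -, hi⟩ : ∃ i ∈ univ, k i < g i :=
      exists_lt_of_sum_lt (hk_mem.1.trans_lt (Nat.lt_of_succ_le hx))
    refine ⟨k + Pi.single i 1, ?_, fun j => ?_⟩
    · simp [sum_add_distrib, hk_mem.1]
    · rcases eq_or_ne j i with rfl | hj
      · simpa using hi
      · simpa [hj] using hk_le j

lemma sum_piAntidiag_prod_pow_le_pow_sum {ι R : Type*} [DecidableEq ι] [CommSemiring R]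
    [PartialOrder R] [IsOrderedRing R] (s : Finset ι) {f : ι → R} (hf : ∀ i ∈ s, 0 ≤ f i)
    (n : ℕ) : ∑ k ∈ piAntidiag s n, ∏ i ∈ s, f i ^ k i ≤ (∑ i ∈ s, f i) ^ n := by
  rw [sum_pow_eq_sum_piAntidiag]
  refine sum_le_sum fun k _ => le_mul_of_one_le_left ?_ ?_
  · exact prod_nonneg fun i hi => pow_nonneg (hf i hi) _
  · simpa using Nat.mono_cast (α := R) (Nat.multinomial_pos s k)

section

variable {Ω : Type*} [MeasurableSpace Ω] {μ : Measure Ω}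

lemma geometric_tail_le [IsProbabilityMeasure μ] {X : Ω → ℕ} (hX : Measurable X) {p : ℝ}
    (hlaw : ∀ k : ℕ, μ {ω | X ω = k} = ENNReal.ofReal ((1 - p) * p ^ k)) (k : ℕ) :
    μ {ω | k ≤ X ω} ≤ ENNReal.ofReal (p ^ k) := by
  have h_below : ENNReal.ofReal (1 - p ^ k) ≤ μ {ω | X ω < k} := calc
    ENNReal.ofReal (1 - p ^ k) = ENNReal.ofReal (∑ j ∈ range k, (1 - p) * p ^ j) := by
      rw [← mul_sum, mul_neg_geom_sum]
    _ ≤ ∑ j ∈ range k, ENNReal.ofReal ((1 - p) * p ^ j) :=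
      le_sum_of_subadditive _ ENNReal.ofReal_zero.le (fun _ _ => ENNReal.ofReal_add_le) _ _
    _ = μ (⋃ j ∈ range k, {ω | X ω = j}) := by
      rw [measure_biUnion_finset]
      · simp only [hlaw]
      · exact fun a _ b _ hab => Set.disjoint_left.2 fun ω ha hb => hab (ha.symm.trans hb)
      · exact fun j _ => hX (measurableSet_singleton j)
    _ = μ {ω | X ω < k} := by congr 1; ext; simp
  calc μ {ω | k ≤ X ω} = 1 - μ {ω | X ω < k} := by
        rw [← prob_compl_eq_one_sub (measurableSet_lt hX measurable_const)]; congr 1; ext; simp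
    _ ≤ 1 - ENNReal.ofReal (1 - p ^ k) := tsub_le_tsub_left h_below _
    _ ≤ ENNReal.ofReal (p ^ k) := by
      rw [tsub_le_iff_right, ← ENNReal.ofReal_one]
      simpa using ENNReal.ofReal_add_le (p := p ^ k) (q := 1 - p ^ k)

lemma ProbabilityTheory.iIndepFun.measure_le_sum_le_sum_prod {ι : Type*} [Fintype ι] [DecidableEq ι]
    {G : ι → Ω → ℕ} (hG : iIndepFun G μ) (x : ℕ) :
    μ {ω | x ≤ ∑ i, G i ω} ≤ ∑ k ∈ piAntidiag univ x, ∏ i, μ {ω | k i ≤ G i ω} := calc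
  μ {ω | x ≤ ∑ i, G i ω} ≤ μ (⋃ k ∈ piAntidiag univ x, ⋂ i, {ω | k i ≤ G i ω}) := by
    refine measure_mono fun ω hω => ?_
    obtain ⟨k, hk, hk_le⟩ := exists_mem_piAntidiag_le hω
    exact Set.mem_biUnion hk (Set.mem_iInter.2 hk_le)
  _ ≤ ∑ k ∈ piAntidiag univ x, μ (⋂ i, {ω | k i ≤ G i ω}) := measure_biUnion_finset_le _ _
  _ = ∑ k ∈ piAntidiag univ x, ∏ i, μ {ω | k i ≤ G i ω} :=
    sum_congr rfl fun k _ => hG.meas_iInter fun i => ⟨Set.Ici (k i), measurableSet_Ici, rfl⟩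

end

theorem sum_geometric_stochastically_dominated_general {Ω : Type*} [MeasurableSpace Ω]
    (μ : Measure Ω) [IsProbabilityMeasure μ]
    (n : ℕ) (q : Fin n → ℝ) (G : Fin n → Ω → ℕ)
    (hq0 : ∀ i, 0 ≤ q i)
    (hmeas : ∀ i, Measurable (G i))
    (hdist : ∀ i (k : ℕ), μ {ω | G i ω = k} = ENNReal.ofReal ((1 - q i) * (q i) ^ k))
    (hindep : iIndepFun G μ) :
    ∀ x : ℕ, μ {ω | x ≤ ∑ i, G i ω} ≤ ENNReal.ofReal ((∑ i, q i) ^ x) := by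
  intro x
  calc μ {ω | x ≤ ∑ i, G i ω}
      ≤ ∑ k ∈ piAntidiag univ x, ∏ i, μ {ω | k i ≤ G i ω} :=
        hindep.measure_le_sum_le_sum_prod x
    _ ≤ ∑ k ∈ piAntidiag univ x, ∏ i, ENNReal.ofReal (q i) ^ k i := by
        gcongr with k _ i
        rw [← ENNReal.ofReal_pow (hq0 i)]
        exact geometric_tail_le (hmeas i) (hdist i) (k i)
    _ ≤ (∑ i, ENNReal.ofReal (q i)) ^ x :=
        sum_piAntidiag_prod_pow_le_pow_sum _ (fun _ _ => zero_le) x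
    _ = ENNReal.ofReal ((∑ i, q i) ^ x) := by
        rw [ENNReal.ofReal_pow (sum_nonneg fun i _ => hq0 i),
          ENNReal.ofReal_sum_of_nonneg fun i _ => hq0 i]

theorem sum_geometric_stochastically_dominated {Ω : Type*} [MeasurableSpace Ω]
    (μ : Measure Ω) [IsProbabilityMeasure μ]
    (n : ℕ) (q : Fin n → ℝ) (G : Fin n → Ω → ℕ)
    (hq0 : ∀ i, 0 ≤ q i) (hq1 : ∑ i, q i < 1)
    (hmeas : ∀ i, Measurable (G i))
    (hdist : ∀ i (k : ℕ), μ {ω | G i ω = k} = ENNReal.ofReal ((1 - q i) * (q i) ^ k))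
    (hindep : iIndepFun G μ) :
    ∀ x : ℕ, μ {ω | x ≤ ∑ i, G i ω} ≤ ENNReal.ofReal ((∑ i, q i) ^ x) :=
  sum_geometric_stochastically_dominated_general μ n q G hq0 hmeas hdist hindep
end

section
/- Let a > 0, ℓ > 1, 0 < g < (2a)^{-1/(ℓ-1)}, 0 < α < 1, and let ε_j = (2a)^{(ℓ^j-1)/(ℓ-1)} g^{ℓ^j}. Then there exists J with J = log_ℓ(ln n) + O(1) such that n^{-α} < ε_J ≤ (n^{-α}/(2a))^{1/ℓ} for all sufficiently large n. -/
open Real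

set_option maxHeartbeats 1000000

theorem double_exp_shrinking_num_phases (a l g α : ℝ) (ha : 0 < a) (hl : 1 < l)
    (hg0 : 0 < g) (hg : g < (2 * a) ^ (-(1 / (l - 1)))) (hα0 : 0 < α) (hα1 : α < 1) :
    ∃ C : ℝ, ∃ N : ℕ, ∀ n : ℕ, N ≤ n → ∃ J : ℕ,
      |(J : ℝ) - Real.logb l (Real.log n)| ≤ C ∧
      (n : ℝ) ^ (-α) < (2 * a) ^ ((l ^ J - 1) / (l - 1)) * g ^ (l ^ J) ∧
      (2 * a) ^ ((l ^ J - 1) / (l - 1)) * g ^ (l ^ J) ≤ ((n : ℝ) ^ (-α) / (2 * a)) ^ (1 / l) := by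
  have ha2 : (0:ℝ) < 2 * a := by linarith
  have hl0 : (0:ℝ) < l := by linarith
  have hl1 : (0:ℝ) < l - 1 := by linarith
  set β : ℝ := (2*a) ^ (1/(l-1)) with hβdef
  have hβ : 0 < β := Real.rpow_pos_of_pos ha2 _
  have hlogβ : Real.log β = Real.log (2*a) / (l-1) := by
    rw [hβdef, Real.log_rpow ha2]; ring
  set q : ℝ := β * g with hqdef
  have hq0 : 0 < q := mul_pos hβ hg0
  have hq1 : q < 1 := by
    have hinv : (2*a) ^ (-(1/(l-1))) = β⁻¹ := by
      rw [hβdef, ← Real.rpow_neg ha2.le]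
    calc q < β * β⁻¹ := by
            rw [hqdef]
            exact mul_lt_mul_of_pos_left (hinv ▸ hg) hβ
      _ = 1 := mul_inv_cancel₀ hβ.ne'
  have hlogq : Real.log q < 0 := Real.log_neg hq0 hq1
  have hlogq' : Real.log q = Real.log β + Real.log g :=
    Real.log_mul hβ.ne' hg0.ne'
  set c₀ : ℝ := -Real.log q with hc₀def
  have hc₀ : 0 < c₀ := by simp only [hc₀def]; linarith
  -- log of ε_J
  have hεlog : ∀ J : ℕ, Real.log ((2*a) ^ ((l ^ J - 1)/(l-1)) * g ^ (l ^ J))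
      = (l:ℝ)^J * Real.log q - Real.log β := by
    intro J
    have h1 : (0:ℝ) < (2*a) ^ ((l ^ J - 1)/(l-1)) := Real.rpow_pos_of_pos ha2 _
    have h2 : (0:ℝ) < g ^ (l ^ J) := Real.rpow_pos_of_pos hg0 _
    rw [Real.log_mul h1.ne' h2.ne', Real.log_rpow ha2, Real.log_rpow hg0, hlogq']
    have h2a : Real.log (2*a) = (l-1) * Real.log β := by
      rw [hlogβ]; field_simp
    rw [h2a]; field_simp; ring
  have hεpos : ∀ J : ℕ, (0:ℝ) < (2*a) ^ ((l ^ J - 1)/(l-1)) * g ^ (l ^ J) := by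
    intro J
    exact mul_pos (Real.rpow_pos_of_pos ha2 _) (Real.rpow_pos_of_pos hg0 _)
  -- constants
  set r₁ : ℝ := α / (2 * c₀) with hr₁def
  set r₂ : ℝ := (α + |Real.log β|) / c₀ with hr₂def
  have hr₁ : 0 < r₁ := by positivity
  have hr₂ : 0 < r₂ := by positivity
  set C : ℝ := 1 + |Real.logb l r₁| + |Real.logb l r₂| with hCdef
  set R : ℝ := max 1 (max (2 * Real.log β / α) (2 * (c₀ + 1) / α)) with hRdef
  refine ⟨C, ⌈Real.exp R⌉₊, fun n hn => ?_⟩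
  have hnR : R ≤ Real.log n := by
    have h1 : Real.exp R ≤ (n:ℝ) := le_trans (Nat.le_ceil _) (Nat.cast_le.mpr hn)
    have h2 : (0:ℝ) < Real.exp R := Real.exp_pos _
    calc R = Real.log (Real.exp R) := (Real.log_exp R).symm
      _ ≤ Real.log n := Real.log_le_log h2 h1
  set L : ℝ := Real.log n with hLdef
  have hL1 : 1 ≤ L := le_trans (le_max_left _ _) hnR
  have hLβ : 2 * Real.log β / α ≤ L := le_trans (le_trans (le_max_left _ _) (le_max_right _ _)) hnR
  have hLc : 2 * (c₀ + 1) / α ≤ L := le_trans (le_trans (le_max_right _ _) (le_max_right _ _)) hnR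
  have hn0 : (0:ℝ) < n := by
    by_contra h
    push_neg at h
    have : L = 0 := by
      rw [hLdef]
      rcases Nat.eq_zero_or_pos n with h0 | h0
      · simp [h0]
      · exfalso; exact absurd (Nat.cast_pos.mpr h0) (not_lt.mpr h)
    linarith
  set T : ℝ := (α * L - Real.log β) / c₀ with hTdef
  have hβle : Real.log β ≤ α * L / 2 := by
    have := (div_le_iff₀ hα0).mp hLβ
    nlinarith
  have hcle : c₀ + 1 ≤ α * L / 2 := by
    have := (div_le_iff₀ hα0).mp hLc
    nlinarith
  have hTlow : r₁ * L ≤ T := by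
    have heq : r₁ * L = (α * L / 2) / c₀ := by
      rw [hr₁def]; field_simp; try ring
    rw [heq, hTdef]
    gcongr
    linarith
  have hThigh : T ≤ r₂ * L := by
    have heq : r₂ * L = (α * L + |Real.log β| * L) / c₀ := by
      rw [hr₂def]; field_simp; try ring
    rw [heq, hTdef]
    gcongr
    have h1 : -Real.log β ≤ |Real.log β| := neg_le_abs _
    have h2 : |Real.log β| ≤ |Real.log β| * L := le_mul_of_one_le_right (abs_nonneg _) hL1
    linarith
  have hT1 : 1 < T := by
    rw [hTdef, lt_div_iff₀ hc₀]
    linarith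
  have hT0 : 0 < T := lt_trans one_pos hT1
  -- choose J
  set x : ℝ := Real.logb l T with hxdef
  have hx0 : 0 < x := Real.logb_pos hl hT1
  have hceil1 : 1 ≤ ⌈x⌉₊ := Nat.one_le_ceil_iff.mpr hx0
  obtain ⟨J, hJlt, hJge⟩ : ∃ J : ℕ, (J:ℝ) < x ∧ x ≤ (J:ℝ) + 1 := by
    refine ⟨⌈x⌉₊ - 1, ?_, ?_⟩ <;>
      rw [Nat.cast_sub hceil1, Nat.cast_one]
    · linarith [Nat.ceil_lt_add_one hx0.le]
    · linarith [Nat.le_ceil x]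
  clear_value x
  have hpowlt : (l:ℝ) ^ J < T := by
    have h := (Real.rpow_lt_rpow_left_iff hl).mpr hJlt
    rwa [Real.rpow_natCast, hxdef, Real.rpow_logb (by linarith) (by linarith) hT0] at h
  have hpowge : T ≤ (l:ℝ) ^ (J + 1) := by
    have h := (Real.rpow_le_rpow_left_iff hl).mpr hJge
    rw [hxdef, Real.rpow_logb (by linarith) (by linarith) hT0] at h
    have hcast : (((J:ℝ)) + 1) = ((J + 1 : ℕ) : ℝ) := by push_cast; ring
    rwa [hcast, Real.rpow_natCast] at h
  refine ⟨J, ?_, ?_, ?_⟩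
  · -- the bound
    have hlogl : 0 < Real.log l := Real.log_pos hl
    have hlow : Real.logb l r₁ + Real.logb l L ≤ x := by
      rw [hxdef, ← Real.logb_mul hr₁.ne' (by linarith : L ≠ 0)]
      exact Real.logb_le_logb_of_le hl (by positivity) hTlow
    have hhigh : x ≤ Real.logb l r₂ + Real.logb l L := by
      rw [hxdef, ← Real.logb_mul hr₂.ne' (by linarith : L ≠ 0)]
      exact Real.logb_le_logb_of_le hl hT0 hThigh
    have habs1 := abs_nonneg (Real.logb l r₁)
    have habs2 := abs_nonneg (Real.logb l r₂)
    have hn1 := neg_abs_le (Real.logb l r₁)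
    have hn2 := le_abs_self (Real.logb l r₂)
    have hLL : Real.logb l (Real.log n) = Real.logb l L := rfl
    rw [hLL, hCdef, abs_le]
    constructor <;> linarith
  · -- lower bound: n^{-α} < ε_J
    rw [← Real.log_lt_log_iff (Real.rpow_pos_of_pos hn0 _) (hεpos _), hεlog,
        Real.log_rpow hn0]
    have hthis : (l:ℝ) ^ J * c₀ < α * L - Real.log β := by
      have := (lt_div_iff₀ hc₀).mp hpowlt
      linarith
    rw [hc₀def] at hthis
    have hLL : Real.log n = L := rfl
    rw [hLL]
    nlinarith [hthis]
  · -- upper bound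
    have hrhs : (0:ℝ) < ((n:ℝ) ^ (-α) / (2*a)) ^ (1/l) :=
      Real.rpow_pos_of_pos (div_pos (Real.rpow_pos_of_pos hn0 _) ha2) _
    rw [← Real.log_le_log_iff (hεpos _) hrhs, hεlog,
        Real.log_rpow (div_pos (Real.rpow_pos_of_pos hn0 _) ha2),
        Real.log_div (Real.rpow_pos_of_pos hn0 _).ne' ha2.ne',
        Real.log_rpow hn0]
    have h2a : Real.log (2*a) = (l-1) * Real.log β := by
      rw [hlogβ]; field_simp
    have hmul : α * L - Real.log β ≤ (l:ℝ) ^ (J + 1) * c₀ := by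
      have := (div_le_iff₀ hc₀).mp hpowge
      linarith
    rw [pow_succ, hc₀def] at hmul
    have hLL : Real.log n = L := rfl
    rw [hLL, h2a]
    have key : l * ((l:ℝ) ^ J * Real.log q - Real.log β)
        ≤ -(α * L) - (l - 1) * Real.log β := by nlinarith [hmul]
    rw [show (1/l) * (-α * L - (l-1) * Real.log β)
          = (-α * L - (l-1) * Real.log β) / l from by ring,
        le_div_iff₀ hl0]
    nlinarith [key]
end

section
/- In the push-pull protocol on the complete graph with n vertices, in a round starting with k informed nodes each uninformed node becomes informed with probability p_k = 1 - (1 - 1/n)^k * (n-k)/n, and this satisfies 2k/n - 3k^2/(2n^2) ≤ p_k ≤ 2k/n for all 0 ≤ k < n. -/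
/-!
Node `x` stays uninformed iff every informed node calls someone other than `x` and `x` calls an
uninformed node. These are constraints on separate coordinates of the call vector, so the failure
event is a box `Fintype.piFinset A`, and under the uniform law its probability is the product
`(1 - 1/n) ^ k * ((n - k) / n)` of the coordinate densities.

With `q = 1/n` and `a = k q`, Bernoulli's inequality `1 - a ≤ (1 - q) ^ k` gives
`p_k ≤ 1 - (1 - a) ^ 2 ≤ 2 a`, and the second-order bound `(1 - q) ^ k ≤ 1 - a + a ^ 2 / 2` gives
`p_k ≥ 1 - (1 - a + a ^ 2 / 2) (1 - a) ≥ 2 a - 3 a ^ 2 / 2`.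
-/

open MeasureTheory Finset

theorem one_sub_pow_le_one_sub_mul_add_sq_div_two {x : ℝ} (h0 : 0 ≤ x) (h1 : x ≤ 1) (k : ℕ) :
    (1 - x) ^ k ≤ 1 - k * x + (k * x) ^ 2 / 2 := by
  induction k with
  | zero => simp
  | succ k ih =>
    calc (1 - x) ^ (k + 1) = (1 - x) ^ k * (1 - x) := pow_succ _ _
      _ ≤ (1 - k * x + (k * x) ^ 2 / 2) * (1 - x) :=
        mul_le_mul_of_nonneg_right ih (by linarith)
      _ ≤ 1 - (k + 1 : ℕ) * x + ((k + 1 : ℕ) * x) ^ 2 / 2 := by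
        push_cast
        nlinarith [sq_nonneg x, mul_nonneg (sq_nonneg ((k : ℝ) * x)) h0]

theorem one_sub_one_sub_pow_mul_mem_Icc {x : ℝ} {k : ℕ} (h0 : 0 ≤ x) (h1 : x ≤ 1)
    (hk : k * x ≤ 1) :
    1 - (1 - x) ^ k * (1 - k * x) ∈ Set.Icc (2 * (k * x) - 3 * (k * x) ^ 2 / 2) (2 * (k * x)) := by
  have bernoulli : 1 - k * x ≤ (1 - x) ^ k := by
    simpa [sub_eq_add_neg] using one_add_mul_le_pow (a := -x) (by linarith) k
  have quadratic := one_sub_pow_le_one_sub_mul_add_sq_div_two h0 h1 k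
  have hkx : 0 ≤ 1 - k * x := by linarith
  constructor
  · nlinarith [mul_le_mul_of_nonneg_right quadratic hkx,
      mul_nonneg (sq_nonneg ((k : ℝ) * x)) (mul_nonneg k.cast_nonneg h0)]
  · nlinarith [mul_le_mul_of_nonneg_right bernoulli hkx]

theorem PMF.toMeasure_uniformOfFintype_piFinset_toReal {ι α : Type*} [Fintype ι]
    [DecidableEq ι] [Fintype α] [Nonempty α] [MeasurableSpace α] [MeasurableSingletonClass α]
    (A : ι → Finset α) :
    ((PMF.uniformOfFintype (ι → α)).toMeasure (Fintype.piFinset A)).toReal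
      = ∏ i, ((A i).card : ℝ) / Fintype.card α := by
  rw [PMF.toMeasure_uniformOfFintype_apply _ (Fintype.piFinset A).finite_toSet.measurableSet]
  simp [prod_div_distrib]

def uninformedCalls (n k : ℕ) (x j : Fin n) : Finset (Fin n) :=
  if (j : ℕ) < k then {x}ᶜ else if j = x then ({y | k ≤ (y : ℕ)} : Finset (Fin n)) else univ

theorem compl_setOf_informed_eq_piFinset {n k : ℕ} {x : Fin n} (hx : k ≤ (x : ℕ)) :
    {f : Fin n → Fin n | (∃ i : Fin n, (i : ℕ) < k ∧ f i = x) ∨ (f x : ℕ) < k}ᶜ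
      = Fintype.piFinset (uninformedCalls n k x) := by
  ext f
  simp only [Set.mem_compl_iff, Set.mem_ofPred_eq, not_or, not_exists, not_and, not_lt,
    mem_coe, Fintype.mem_piFinset, uninformedCalls]
  constructor
  · rintro ⟨push, pull⟩ j
    split_ifs with hj hjx
    · simpa using push j hj
    · subst hjx; simpa using pull
    · exact mem_univ _
  · intro h
    refine ⟨fun i hi => by simpa [hi] using h i, ?_⟩
    simpa [Nat.not_lt.mpr hx] using h x

theorem card_uninformedCalls_div {n k : ℕ} (hk : k ≤ n) (x j : Fin n) :
    ((uninformedCalls n k x j).card : ℝ) / n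
      = if (j : ℕ) < k then 1 - 1 / (n : ℝ) else if j = x then ((n : ℝ) - k) / n else 1 := by
  have hn : (n : ℝ) ≠ 0 := by exact_mod_cast j.pos.ne'
  unfold uninformedCalls
  split_ifs
  · rw [card_compl, card_singleton, Fintype.card_fin, Nat.cast_sub j.pos, Nat.cast_one]
    field_simp
  · have hsplit := card_filter_add_card_filter_not (s := univ) (fun y : Fin n => (y : ℕ) < k)
    simp only [Fin.card_filter_val_lt, not_lt, card_univ, Fintype.card_fin, min_eq_right hk]
      at hsplit
    have hcard : #({y | k ≤ (y : ℕ)} : Finset (Fin n)) = n - k := by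
      convert Nat.eq_sub_of_add_eq' hsplit
    rw [hcard, Nat.cast_sub hk]
  · simp [hn]

theorem prod_card_uninformedCalls_div {n k : ℕ} {x : Fin n} (hx : k ≤ (x : ℕ)) :
    ∏ j, ((uninformedCalls n k x j).card : ℝ) / n
      = (1 - 1 / (n : ℝ)) ^ k * (((n : ℝ) - k) / n) := by
  have hk : k ≤ n := hx.trans x.isLt.le
  simp only [card_uninformedCalls_div hk]
  rw [prod_ite, prod_const, prod_ite_eq', Fin.card_filter_val_lt, min_eq_right hk]
  simp [hx]

theorem measureReal_uniformOfFintype_uninformed {n k : ℕ} [NeZero n] {x : Fin n}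
    (hx : k ≤ (x : ℕ)) :
    (PMF.uniformOfFintype (Fin n → Fin n)).toMeasure.real
        {f | (∃ i : Fin n, (i : ℕ) < k ∧ f i = x) ∨ (f x : ℕ) < k}ᶜ
      = (1 - 1 / (n : ℝ)) ^ k * (((n : ℝ) - k) / n) := by
  rw [measureReal_def, compl_setOf_informed_eq_piFinset hx, PMF.toMeasure_uniformOfFintype_piFinset_toReal,
    Fintype.card_fin, prod_card_uninformedCalls_div hx]

/-- `f j` is the node called by `j`; the informed nodes are those `y` with `(y : ℕ) < k`. -/
theorem push_pull_protocol_success_probability_general (n k : ℕ)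
    (x : Fin n) (hx : k ≤ (x : ℕ)) :
    ((@PMF.uniformOfFintype (Fin n → Fin n) _ ⟨id⟩).toMeasure
        {f | (∃ i : Fin n, (i : ℕ) < k ∧ f i = x) ∨ ((f x : ℕ) < k)}).toReal
      = 1 - (1 - 1 / (n : ℝ)) ^ k * (((n : ℝ) - k) / n) ∧
    2 * (k : ℝ) / n - 3 * (k : ℝ) ^ 2 / (2 * (n : ℝ) ^ 2)
      ≤ 1 - (1 - 1 / (n : ℝ)) ^ k * (((n : ℝ) - k) / n) ∧
    1 - (1 - 1 / (n : ℝ)) ^ k * (((n : ℝ) - k) / n) ≤ 2 * (k : ℝ) / n := by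
  have : NeZero n := ⟨x.pos.ne'⟩
  have hn : (1 : ℝ) ≤ n := by exact_mod_cast x.pos
  have hkn : (k : ℝ) ≤ n := by exact_mod_cast hx.trans x.isLt.le
  obtain ⟨lower, upper⟩ := one_sub_one_sub_pow_mul_mem_Icc (k := k) (x := 1 / (n : ℝ))
    (by positivity) (by rw [div_le_one (by positivity)]; exact hn)
    (by rw [mul_one_div, div_le_one (by positivity)]; exact hkn)
  have hfrac : ((n : ℝ) - k) / n = 1 - k * (1 / n) := by field_simp
  refine ⟨?_, ?_, ?_⟩
  · rw [← measureReal_uniformOfFintype_uninformed hx,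
      probReal_compl_eq_one_sub (Set.toFinite _).measurableSet, sub_sub_cancel, measureReal_def]
  · rw [hfrac]
    exact le_of_eq_of_le (by ring) lower
  · rw [hfrac]
    exact le_of_le_of_eq upper (by ring)

/-- Push-pull protocol on the complete graph: every node calls a uniformly random node,
independently; the informed nodes are those `y` with `(y : ℕ) < k`.  An uninformed node
`x` becomes informed iff some informed node calls it (push) or it calls an informed node
(pull). -/
theorem push_pull_protocol_success_probability (n k : ℕ) (hn : 0 < n) (hk : k < n)
    (x : Fin n) (hx : k ≤ (x : ℕ)) :
    ((@PMF.uniformOfFintype (Fin n → Fin n) _ ⟨id⟩).toMeasure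
        {f | (∃ i : Fin n, (i : ℕ) < k ∧ f i = x) ∨ ((f x : ℕ) < k)}).toReal
      = 1 - (1 - 1 / (n : ℝ)) ^ k * (((n : ℝ) - k) / n) ∧
    2 * (k : ℝ) / n - 3 * (k : ℝ) ^ 2 / (2 * (n : ℝ) ^ 2)
      ≤ 1 - (1 - 1 / (n : ℝ)) ^ k * (((n : ℝ) - k) / n) ∧
    1 - (1 - 1 / (n : ℝ)) ^ k * (((n : ℝ) - k) / n) ≤ 2 * (k : ℝ) / n :=
  push_pull_protocol_success_probability_general n k x hx
end

section
/- In the push-pull protocol with per-call success probability p ∈ (0,1) on the complete graph with n vertices, the probability that an uninformed node stays uninformed in a round starting with u = n - k uninformed nodes is (1 - p(n-u)/n)(1 - p/n)^{n-u}, and for 0 ≤ u < n/p this lies between (1-p)e^{-p} + p e^{-p} u/n and (1-p)e^{-p} + 3p e^{-p} u/n. -/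
/-!
The `n` calls are independent, so the event factors: the pull of `x` must not be a successful call
to one of the `n - u` informed nodes, and no informed node may successfully call `x`; this gives
`(1 - p (n - u) / n) (1 - p / n) ^ (n - u)`.

For the bounds write `1 - p (n - u) / n = (1 - p) + s` with `s = p u / n ≤ p`. From
`log (1 - t) ≥ -t / (1 - t)` one gets `exp (-p) ≤ (1 - p / n) ^ (n - 1) ≤ (1 - p / n) ^ (n - u)`,
which is the lower bound. Conversely `(1 - p / n) ^ (n - u) ≤ exp (-p + s)`, and
`(a + s) exp s ≤ a + 3 s` whenever `a, s ≥ 0`, `a + s ≤ 1` (from `exp s ≤ 1 + s + s ^ 2`).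
-/

open MeasureTheory Real Finset
open scoped NNReal

namespace PushPull

noncomputable def stayUninformedProb (n u : ℕ) (p : ℝ) : ℝ :=
  (1 - p * ((n : ℝ) - u) / n) * (1 - p / (n : ℝ)) ^ (n - u)

section Probability

variable {α : Type*} [MeasurableSpace α]

lemma measureReal_pi_setOf_mem_and_forall_mem {ι : Type*} [Fintype ι] (μ : Measure α)
    [IsProbabilityMeasure μ] {x : ι} {s : Finset ι} (hx : x ∉ s) (A B : Set α) :
    (Measure.pi fun _ : ι => μ).real {ω | ω x ∈ A ∧ ∀ y ∈ s, ω y ∈ B} =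
      μ.real A * μ.real B ^ #s := by
  classical
  have hpi : {ω : ι → α | ω x ∈ A ∧ ∀ y ∈ s, ω y ∈ B} =
      ((insert x s : Finset ι) : Set ι).pi (Function.update (fun _ => B) x A) := by
    ext ω
    simp only [Set.mem_ofPred_eq, coe_insert, Set.insert_pi, Set.mem_inter_iff,
      Set.mem_preimage, Function.update_self, Set.mem_pi, mem_coe]
    refine and_congr_right fun _ => forall₂_congr fun y hy => ?_
    rw [Function.update_of_ne (ne_of_mem_of_not_mem hy hx)]
  have hprod : ∏ y ∈ s, μ (Function.update (fun _ => B) x A y) = μ B ^ #s := by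
    rw [prod_congr rfl fun y hy => by rw [Function.update_of_ne (ne_of_mem_of_not_mem hy hx)],
      prod_const]
  rw [measureReal_def, hpi, Measure.pi_pi_finset, prod_insert hx, Function.update_self, hprod,
    ENNReal.toReal_mul, ENNReal.toReal_pow, measureReal_def, measureReal_def]

lemma measureReal_prod_bernoulli_compl_prod_true (ν : Measure α) [IsProbabilityMeasure ν]
    (p : ℝ≥0) (hp : p ≤ 1) {T : Set α} (hT : MeasurableSet T) :
    (ν.prod (PMF.bernoulli p hp).toMeasure).real (T ×ˢ {true})ᶜ = 1 - ν.real T * p := by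
  rw [probReal_compl_eq_one_sub (hT.prod (measurableSet_singleton _)), measureReal_prod_prod,
    measureReal_def (s := {true}), PMF.toMeasure_apply_singleton _ _ (measurableSet_singleton _),
    PMF.bernoulli_apply]
  rfl

lemma measureReal_uniformOfFintype [Fintype α] [Nonempty α] [MeasurableSingletonClass α]
    (s : Finset α) : (PMF.uniformOfFintype α).toMeasure.real s = #s / Fintype.card α := by
  simp [measureReal_def, PMF.toMeasure_uniformOfFintype_apply _ s.measurableSet,
    ENNReal.toReal_div]

end Probability

section Analysis

lemma exp_neg_div_one_sub_le {x : ℝ} (hx : x < 1) : exp (-(x / (1 - x))) ≤ 1 - x := by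
  have hpos : 0 < 1 - x := by linarith
  rw [← le_log_iff_exp_le hpos]
  calc -(x / (1 - x)) = 1 - (1 - x)⁻¹ := by field_simp; ring
    _ ≤ log (1 - x) := one_sub_inv_le_log_of_pos hpos

lemma exp_neg_le_one_sub_div_pow {n k : ℕ} {p : ℝ} (hk : k < n) (hp0 : 0 ≤ p) (hp1 : p < 1) :
    exp (-p) ≤ (1 - p / n) ^ k := by
  have hk' : (k : ℝ) + 1 ≤ n := by exact_mod_cast hk
  have hn : (0 : ℝ) < n := by linarith [k.cast_nonneg (α := ℝ)]
  have hpn : p / n < 1 := (div_lt_one hn).2 (by linarith)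
  -- `x / (1 - x)` at `x = p / n` is `p / (n - p)`, and `k ≤ n - 1 ≤ n - p`
  have hexponent : -p ≤ k * -(p / n / (1 - p / n)) := by
    have hfrac : p / n / (1 - p / n) = p / (n - p) := by field_simp
    rw [hfrac, mul_neg, neg_le_neg_iff, ← mul_div_assoc, div_le_iff₀ (by linarith)]
    nlinarith
  calc exp (-p) ≤ exp (-(p / n / (1 - p / n))) ^ k := by
        rw [← exp_nat_mul]; exact exp_le_exp.2 hexponent
    _ ≤ (1 - p / n) ^ k := by
        gcongr
        exact exp_neg_div_one_sub_le hpn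

lemma one_sub_pow_le_exp_neg_mul {t : ℝ} (ht : t ≤ 1) (k : ℕ) : (1 - t) ^ k ≤ exp (-(k * t)) := by
  calc (1 - t) ^ k ≤ exp (-t) ^ k := pow_le_pow_left₀ (by linarith) (one_sub_le_exp_neg t) k
    _ = exp (-(k * t)) := by rw [← exp_nat_mul, mul_neg]

lemma add_mul_exp_le_add_three_mul {a s : ℝ} (ha : 0 ≤ a) (hs : 0 ≤ s) (has : a + s ≤ 1) :
    (a + s) * exp s ≤ a + 3 * s := by
  have hs1 : |s| ≤ 1 := by rw [abs_of_nonneg hs]; linarith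
  have hexp : exp s ≤ 1 + s + s ^ 2 := by
    linarith [le_abs_self (exp s - 1 - s), abs_exp_sub_one_sub_id_le hs1]
  calc (a + s) * exp s ≤ (a + s) * (1 + s + s ^ 2) := by gcongr
    _ ≤ a + 3 * s := by nlinarith [mul_nonneg ha hs, mul_nonneg (mul_nonneg ha hs) hs]

end Analysis

section Bounds

variable {n u : ℕ} {p : ℝ}

lemma one_sub_mul_sub_div (hn : (n : ℝ) ≠ 0) :
    1 - p * ((n : ℝ) - u) / n = (1 - p) + p * (u / n) := by
  field_simp; ring

lemma le_stayUninformedProb (hu : 1 ≤ u) (hun : u ≤ n) (hp0 : 0 ≤ p) (hp1 : p < 1) :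
    (1 - p) * exp (-p) + p * exp (-p) * ((u : ℝ) / n) ≤ stayUninformedProb n u p := by
  have hn : (0 : ℝ) < n := by exact_mod_cast hu.trans hun
  have hpull : 0 ≤ (1 - p) + p * (u / n) := by
    have : (0 : ℝ) ≤ u / n := by positivity
    nlinarith
  calc (1 - p) * exp (-p) + p * exp (-p) * ((u : ℝ) / n)
      = ((1 - p) + p * (u / n)) * exp (-p) := by ring
    _ ≤ ((1 - p) + p * (u / n)) * (1 - p / n) ^ (n - u) :=
        mul_le_mul_of_nonneg_left (exp_neg_le_one_sub_div_pow (by omega) hp0 hp1) hpull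
    _ = stayUninformedProb n u p := by rw [stayUninformedProb, one_sub_mul_sub_div hn.ne']

lemma stayUninformedProb_le (hn : 0 < n) (hun : u ≤ n) (hp0 : 0 ≤ p) (hp1 : p ≤ 1) :
    stayUninformedProb n u p ≤ (1 - p) * exp (-p) + 3 * p * exp (-p) * ((u : ℝ) / n) := by
  have hn' : (0 : ℝ) < n := by exact_mod_cast hn
  set s := p * ((u : ℝ) / n) with hs
  have hs0 : 0 ≤ s := by positivity
  have hsp : s ≤ p := mul_le_of_le_one_right hp0 (div_le_one_of_le₀ (by exact_mod_cast hun) hn'.le)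
  -- `p (n - u) / n = p - s`
  have hpush : (1 - p / n) ^ (n - u) ≤ exp (-p) * exp s := by
    calc (1 - p / n) ^ (n - u) ≤ exp (-((n - u : ℕ) * (p / n))) :=
          one_sub_pow_le_exp_neg_mul (div_le_one_of_le₀ (hp1.trans (by exact_mod_cast hn)) hn'.le) _
      _ = exp (-p) * exp s := by
          rw [← exp_add, Nat.cast_sub hun, hs]; congr 1; field_simp; ring
  calc stayUninformedProb n u p = ((1 - p) + s) * (1 - p / n) ^ (n - u) := by
        rw [stayUninformedProb, one_sub_mul_sub_div hn'.ne']
    _ ≤ ((1 - p) + s) * (exp (-p) * exp s) := by gcongr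
    _ = ((1 - p) + s) * exp s * exp (-p) := by ring
    _ ≤ ((1 - p) + 3 * s) * exp (-p) := by
        gcongr; exact add_mul_exp_le_add_three_mul (by linarith) hs0 (by linarith)
    _ = (1 - p) * exp (-p) + 3 * p * exp (-p) * ((u : ℝ) / n) := by ring

end Bounds

section Protocol

noncomputable def callMeasure (n : ℕ) (hn : 0 < n) (p : ℝ≥0) (hp : p ≤ 1) :
    Measure (Fin n × Bool) :=
  (@PMF.uniformOfFintype (Fin n) _ ⟨⟨0, hn⟩⟩).toMeasure.prod (PMF.bernoulli p hp).toMeasure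

/-- The nodes `y` with `y < n - u` are the informed ones. -/
def staysUninformed (n u : ℕ) (x : Fin n) : Set (Fin n → Fin n × Bool) :=
  {ω | ¬ ((ω x).2 = true ∧ ((ω x).1 : ℕ) < n - u) ∧
    ∀ y : Fin n, (y : ℕ) < n - u → ¬ ((ω y).1 = x ∧ (ω y).2 = true)}

lemma measureReal_staysUninformed {n u : ℕ} {p : ℝ} (hn : 0 < n) (hun : u ≤ n) (hp0 : 0 ≤ p)
    (hp1 : p ≤ 1) {x : Fin n} (hx : n - u ≤ (x : ℕ)) :
    (Measure.pi fun _ => callMeasure n hn p.toNNReal (Real.toNNReal_le_one.mpr hp1)).real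
      (staysUninformed n u x) = stayUninformedProb n u p := by
  have : Nonempty (Fin n) := ⟨⟨0, hn⟩⟩
  set informed : Finset (Fin n) := {y | (y : ℕ) < n - u}
  have hx' : x ∉ informed := by simp [informed, hx]
  have hevent : staysUninformed n u x =
      {ω | ω x ∈ ((informed : Set (Fin n)) ×ˢ {true})ᶜ ∧
        ∀ y ∈ informed, ω y ∈ ((({x} : Finset (Fin n)) : Set (Fin n)) ×ˢ {true})ᶜ} := by
    ext ω
    simp only [staysUninformed, informed, Set.mem_ofPred_eq, Set.mem_compl_iff, Set.mem_prod,
      coe_filter, mem_univ, true_and, coe_singleton, Set.mem_singleton_iff, mem_filter]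
    rw [and_comm (a := (ω x).2 = true)]
  rw [hevent, callMeasure, measureReal_pi_setOf_mem_and_forall_mem _ hx',
    measureReal_prod_bernoulli_compl_prod_true _ _ _ informed.measurableSet,
    measureReal_prod_bernoulli_compl_prod_true _ _ _ (Finset.measurableSet _),
    measureReal_uniformOfFintype, measureReal_uniformOfFintype, Fin.card_filter_val_lt,
    card_singleton, Fintype.card_fin, min_eq_right (Nat.sub_le n u), Real.coe_toNNReal _ hp0,
    stayUninformedProb, Nat.cast_sub hun]
  ring

end Protocol

end PushPull

open PushPull in
/-- Push-pull protocol with transmission failures on the complete graph with `n` nodes,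
`u` of which (those `y` with `n - u ≤ (y : ℕ)`) are uninformed.  Each node independently
picks a uniformly random target and its call independently succeeds with probability `p`.
The uninformed node `x` stays uninformed iff its own (pull) call does not successfully
reach an informed node and no informed node's (push) call successfully reaches `x`. -/
theorem faulty_push_pull_stay_uninformed (n u : ℕ) (p : ℝ) (hn : 0 < n) (hun : u ≤ n)
    (hp0 : 0 < p) (hp1 : p < 1)
    (x : Fin n) (hx : n - u ≤ (x : ℕ)) :
    (Measure.pi
      (fun _ : Fin n =>
        Measure.prod (@PMF.uniformOfFintype (Fin n) _ ⟨⟨0, hn⟩⟩).toMeasure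
          (PMF.bernoulli (Real.toNNReal p)
            (by simpa using Real.toNNReal_le_one.mpr hp1.le)).toMeasure)
      {ω : Fin n → Fin n × Bool |
        ¬ ((ω x).2 = true ∧ ((ω x).1 : ℕ) < n - u) ∧
        ∀ y : Fin n, (y : ℕ) < n - u → ¬ ((ω y).1 = x ∧ (ω y).2 = true)}).toReal
      = (1 - p * ((n : ℝ) - u) / n) * (1 - p / (n : ℝ)) ^ (n - u) ∧
    (1 - p) * Real.exp (-p) + p * Real.exp (-p) * ((u : ℝ) / n)
      ≤ (1 - p * ((n : ℝ) - u) / n) * (1 - p / (n : ℝ)) ^ (n - u) ∧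
    (1 - p * ((n : ℝ) - u) / n) * (1 - p / (n : ℝ)) ^ (n - u)
      ≤ (1 - p) * Real.exp (-p) + 3 * p * Real.exp (-p) * ((u : ℝ) / n) := by
  have hu : 1 ≤ u := by omega
  exact ⟨measureReal_staysUninformed hn hun hp0.le hp1.le hx,
    le_stayUninformedProb hu hun hp0.le hp1, stayUninformedProb_le hn hun hp0.le hp1.le⟩
end

section
/- In the single-incoming-call pull protocol on the complete graph with n nodes, in a round starting with k informed nodes (so n - k uninformed nodes each making one pull call, each informed node answering only the call with the lowest uniformly random order), a fixed uninformed node becomes informed with probability p_k = (k/(n-k)) * (1 - (1 - 1/n)^{n-k}). -/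
/-!
Fix the order σ and let r = σ x. Caller x succeeds iff its target is one of the k informed
nodes and none of the r callers ranked before it picks the same target, so exactly
k (n-1)^r n^(M-1-r) of the n^M target assignments are successful (M = n - k). Each rank
is attained by (M-1)! orders, and the geometric sum Σ_r (n-1)^r n^(M-1-r) = n^M - (n-1)^M
gives the probability k (n^M - (n-1)^M) / (M n^M).
-/

open Finset
open scoped Nat

section Counting

variable {ι α : Type*} [Fintype ι] [DecidableEq ι] [Fintype α] [DecidableEq α]

theorem card_filter_apply_eq_and_forall_ne {x : ι} {s : Finset ι} (hx : x ∉ s) (v : α) :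
    #{f : ι → α | f x = v ∧ ∀ y ∈ s, f y ≠ v}
      = (Fintype.card α - 1) ^ #s * Fintype.card α ^ (Fintype.card ι - 1 - #s) := by
  have hpi : ({f : ι → α | f x = v ∧ ∀ y ∈ s, f y ≠ v} : Finset (ι → α))
      = Fintype.piFinset fun y =>
          if y = x then {v} else if y ∈ s then univ.erase v else univ := by
    ext f
    simp only [mem_filter, mem_univ, true_and, Fintype.mem_piFinset]
    constructor
    · rintro ⟨rfl, hs⟩ y
      split_ifs with hyx hys
      · simp [hyx]
      · simpa using hs y hys
      · exact mem_univ _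
    · intro h
      have hfx : f x = v := by simpa using h x
      refine ⟨hfx, fun y hy => ?_⟩
      have hyx : y ≠ x := fun h => hx (h ▸ hy)
      simpa [hyx, hy] using h y
  have hfilter : (univ.erase x).filter (· ∈ s) = s := by
    ext y; simp only [mem_filter, mem_erase, mem_univ]; grind
  have hsc : #((univ.erase x).filter (· ∉ s)) = Fintype.card ι - 1 - #s := by
    have := card_filter_add_card_filter_not (s := univ.erase x) (· ∈ s)
    rw [hfilter, card_erase_of_mem (mem_univ x), card_univ] at this
    omega
  have hfactor : ∀ y ∈ univ.erase x,
      #(if y = x then {v} else if y ∈ s then univ.erase v else univ)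
        = if y ∈ s then Fintype.card α - 1 else Fintype.card α := fun y hy => by
    rw [if_neg (ne_of_mem_erase hy)]; split_ifs <;> simp [card_erase_of_mem]
  rw [hpi, Fintype.card_piFinset, ← mul_prod_erase univ _ (mem_univ x), if_pos rfl,
    card_singleton, one_mul, prod_congr rfl hfactor, prod_ite, hfilter, prod_const, prod_const, hsc]

theorem card_filter_apply_mem_and_forall_ne (T : Finset α) {x : ι} {s : Finset ι}
    (hx : x ∉ s) :
    #{f : ι → α | f x ∈ T ∧ ∀ y ∈ s, f y ≠ f x}
      = #T * ((Fintype.card α - 1) ^ #s * Fintype.card α ^ (Fintype.card ι - 1 - #s)) := by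
  rw [card_eq_sum_card_fiberwise (f := fun f => f x) (t := T) fun f hf => (mem_filter.1 hf).2.1,
    ← smul_eq_mul, ← sum_const]
  refine sum_congr rfl fun v hv => ?_
  rw [filter_filter, ← card_filter_apply_eq_and_forall_ne hx v]
  congr 1
  ext f
  simp only [mem_filter, mem_univ, true_and]
  constructor
  · rintro ⟨⟨-, hs⟩, rfl⟩; exact ⟨rfl, hs⟩
  · rintro ⟨rfl, hs⟩; exact ⟨⟨hv, hs⟩, rfl⟩

end Counting

theorem Equiv.Perm.sum_apply_eq_factorial_mul_sum {ι : Type*} [Fintype ι] [DecidableEq ι]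
    (x : ι) (g : ι → ℕ) :
    ∑ σ : Equiv.Perm ι, g (σ x) = (Fintype.card ι - 1)! * ∑ i, g i := by
  have hindep : ∀ y, ∑ σ : Equiv.Perm ι, g (σ y) = ∑ σ : Equiv.Perm ι, g (σ x) := by
    intro y
    rw [← Equiv.sum_comp (Equiv.mulRight (Equiv.swap x y))]
    simp [Equiv.Perm.mul_apply]
  have hcard : 0 < Fintype.card ι := Fintype.card_pos_iff.2 ⟨x⟩
  have htotal : Fintype.card ι * ∑ σ : Equiv.Perm ι, g (σ x)
      = Fintype.card ι * ((Fintype.card ι - 1)! * ∑ i, g i) := by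
    calc Fintype.card ι * ∑ σ : Equiv.Perm ι, g (σ x)
        = ∑ y, ∑ σ : Equiv.Perm ι, g (σ y) := by simp [hindep]
      _ = ∑ σ : Equiv.Perm ι, ∑ i, g i := by
        rw [sum_comm]; exact sum_congr rfl fun σ _ => Equiv.sum_comp σ g
      _ = Fintype.card ι * ((Fintype.card ι - 1)! * ∑ i, g i) := by
        rw [sum_const, card_univ, Fintype.card_perm, smul_eq_mul, ← mul_assoc,
          Nat.mul_factorial_pred hcard.ne']
  exact Nat.eq_of_mul_eq_mul_left hcard htotal

theorem card_filter_perm_apply_lt {M : ℕ} (σ : Equiv.Perm (Fin M)) (x : Fin M) :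
    #{y | σ y < σ x} = σ x := by
  rw [← Fin.card_Iio, ← card_map σ.toEmbedding]
  congr 1
  ext i
  simp

theorem card_pull_success_of_perm {n k M : ℕ} (hk : k ≤ n) (σ : Equiv.Perm (Fin M))
    (x : Fin M) :
    #{f : Fin M → Fin n | (f x : ℕ) < k ∧ ∀ y, y ≠ x → f y = f x → σ x < σ y}
      = k * ((n - 1) ^ (σ x : ℕ) * n ^ (M - 1 - σ x)) := by
  have hx : x ∉ ({y | σ y < σ x} : Finset (Fin M)) := by simp
  have hcount := card_filter_apply_mem_and_forall_ne ({v : Fin n | (v : ℕ) < k}) hx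
  rw [Fin.card_filter_val_lt, min_eq_right hk, card_filter_perm_apply_lt, Fintype.card_fin,
    Fintype.card_fin] at hcount
  rw [← hcount]
  congr 1
  ext f
  simp only [mem_filter, mem_univ, true_and]
  -- a call to the same target from a later caller loses to x, one from an earlier caller beats it
  refine and_congr_right fun _ => forall_congr' fun y => ?_
  constructor
  · intro h hlt heq
    exact lt_asymm hlt (h (fun hyx => (hyx ▸ hlt).false) heq)
  · intro h hyx heq
    exact lt_of_le_of_ne (not_lt.1 fun hlt => h hlt heq) (σ.injective.ne hyx.symm)

theorem card_pull_success {n k M : ℕ} (hk : k ≤ n) (x : Fin M) :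
    #{σf : Equiv.Perm (Fin M) × (Fin M → Fin n) |
        (σf.2 x : ℕ) < k ∧ ∀ y, y ≠ x → σf.2 y = σf.2 x → σf.1 x < σf.1 y}
      = (M - 1)! * (k * ∑ j ∈ range M, (n - 1) ^ j * n ^ (M - 1 - j)) := by
  rw [card_filter, Fintype.sum_prod_type]
  simp only [← card_filter, card_pull_success_of_perm hk]
  rw [Equiv.Perm.sum_apply_eq_factorial_mul_sum x
      fun j => k * ((n - 1) ^ (j : ℕ) * n ^ (M - 1 - j)),
    Fintype.card_fin, Fin.sum_univ_eq_sum_range fun j => k * ((n - 1) ^ j * n ^ (M - 1 - j)),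
    ← mul_sum]

theorem geom_sum_pred_add_pow {n : ℕ} (hn : 0 < n) (M : ℕ) :
    ∑ j ∈ range M, (n - 1) ^ j * n ^ (M - 1 - j) + (n - 1) ^ M = n ^ M := by
  have h := geom_sum₂_mul_add 1 (n - 1) M
  rwa [Nat.add_sub_cancel' hn, mul_one, geom_sum₂_comm] at h

theorem single_call_pull_success_probability_general (n k : ℕ) (hn : 0 < n)
    (x : Fin (n - k)) :
    letI : MeasurableSpace (Equiv.Perm (Fin (n - k))) := ⊤
    ((@PMF.uniformOfFintype (Equiv.Perm (Fin (n - k)) × (Fin (n - k) → Fin n)) _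
        ⟨⟨Equiv.refl _, fun _ => ⟨0, hn⟩⟩⟩).toMeasure
      {σf | ((σf.2 x : ℕ) < k) ∧
        ∀ y : Fin (n - k), y ≠ x → σf.2 y = σf.2 x → σf.1 x < σf.1 y}).toReal
      = ((k : ℝ) / ((n : ℝ) - k)) * (1 - (1 - 1 / (n : ℝ)) ^ (n - k)) := by
  classical
  let : MeasurableSpace (Equiv.Perm (Fin (n - k))) := ⊤
  have : Nonempty (Equiv.Perm (Fin (n - k)) × (Fin (n - k) → Fin n)) :=
    ⟨⟨Equiv.refl _, fun _ => ⟨0, hn⟩⟩⟩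
  have hM : 0 < n - k := x.pos
  have hk : k < n := by omega
  rw [PMF.toMeasure_uniformOfFintype_apply _ (Set.to_countable _).measurableSet,
    ← Set.toFinset_card, Set.toFinset_ofPred, card_pull_success hk.le, Fintype.card_prod,
    Fintype.card_perm, Fintype.card_fun, Fintype.card_fin, Fintype.card_fin, ENNReal.toReal_div,
    ENNReal.toReal_natCast, ENNReal.toReal_natCast]
  have hpred : ((n - 1 : ℕ) : ℝ) = n - 1 := by rw [Nat.cast_sub hn, Nat.cast_one]
  have hgeom : ((∑ j ∈ range (n - k), (n - 1) ^ j * n ^ (n - k - 1 - j) : ℕ) : ℝ)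
      = (n : ℝ) ^ (n - k) - ((n : ℝ) - 1) ^ (n - k) := by
    rw [← hpred]
    exact eq_sub_of_add_eq (by exact_mod_cast geom_sum_pred_add_pow hn (n - k))
  have hfact : ((n - k)! : ℝ) = ((n : ℝ) - k) * (n - k - 1)! := by
    rw [← Nat.mul_factorial_pred hM.ne', Nat.cast_mul, Nat.cast_sub hk.le]
  rw [Nat.cast_mul, Nat.cast_mul, Nat.cast_mul, Nat.cast_pow, hgeom, hfact]
  have hnk : (n : ℝ) - k ≠ 0 := sub_ne_zero.2 (by exact_mod_cast hk.ne')
  have hn' : (n : ℝ) ≠ 0 := by exact_mod_cast hn.ne'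
  rw [one_sub_div hn', div_pow]
  field_simp

/-- Single-incoming-call pull protocol, in a round with `k` informed nodes (targets with
index `< k` are informed) and `n - k` uninformed callers.  A uniformly random order
(permutation) is placed on the callers and each caller targets a uniformly random node;
a node answers only the incoming call of lowest order.  The fixed uninformed caller `x`
becomes informed iff its target is informed and its call has the lowest order among all
calls to that target. -/
theorem single_call_pull_success_probability (n k : ℕ) (hn : 0 < n) (hk : k < n)
    (x : Fin (n - k)) :
    letI : MeasurableSpace (Equiv.Perm (Fin (n - k))) := ⊤
    ((@PMF.uniformOfFintype (Equiv.Perm (Fin (n - k)) × (Fin (n - k) → Fin n)) _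
        ⟨⟨Equiv.refl _, fun _ => ⟨0, hn⟩⟩⟩).toMeasure
      {σf | ((σf.2 x : ℕ) < k) ∧
        ∀ y : Fin (n - k), y ≠ x → σf.2 y = σf.2 x → σf.1 x < σf.1 y}).toReal
      = ((k : ℝ) / ((n : ℝ) - k)) * (1 - (1 - 1 / (n : ℝ)) ^ (n - k)) :=
  single_call_pull_success_probability_general n k hn x
end

section
/- Let ε ∈ (0,1), δ ∈ (0,1), s > 0, and set q_j := min{1-ε, s δ^j} for j ≥ 0. Let G_0, ..., G_{J-1} be independent with G_j ~ Geom(1 - q_j) (failures before success), and let G be any random variable stochastically dominated by Σ_{j<J} G_j. Then there exist constants A, α > 0 (independent of J and r) such that Pr[G > r] ≤ A e^{-α r} for every positive integer r. -/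
/-!
Chernoff bound with the probability generating function at `θ⁻¹`, where `θ = 1 - ε/2`.
A geometric variable with parameter `q ≤ 1 - ε` has `E[θ^{-G}] = (1 - q)/(1 - q/θ) ≤ 1 + q`, so by
independence `E[θ^{-∑ G_j}] ≤ ∏ (1 + q_j) ≤ exp (∑ s δ^j) ≤ exp (s/(1 - δ))` uniformly in `J`,
and Markov's inequality gives `Pr[∑ G_j ≥ r] ≤ exp (s/(1 - δ)) θ^r`.
-/

open MeasureTheory ProbabilityTheory

theorem one_sub_div_one_sub_inv_mul_le_one_add {q θ : ℝ} (hq : 0 ≤ q) (hqθ : q < θ)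
    (hq2θ : q ≤ 2 * θ - 1) : (1 - q) / (1 - θ⁻¹ * q) ≤ 1 + q := by
  have hθ : 0 < θ := hq.trans_lt hqθ
  have hden : 0 < 1 - θ⁻¹ * q := by
    rw [sub_pos, inv_mul_lt_one₀ hθ]
    exact hqθ
  rw [div_le_iff₀ hden]
  have hdiff : (1 + q) * (1 - θ⁻¹ * q) - (1 - q) = θ⁻¹ * q * (2 * θ - 1 - q) := by
    field_simp
    ring
  rw [← sub_nonneg, hdiff]
  exact mul_nonneg (mul_nonneg (inv_nonneg.2 hθ.le) hq) (sub_nonneg.2 hq2θ)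

section GeneratingFunction

variable {Ω : Type*} [MeasurableSpace Ω] {μ : Measure Ω} {X : Ω → ℕ}

theorem lintegral_comp_nat_eq_tsum (hX : Measurable X) (f : ℕ → ENNReal) :
    ∫⁻ ω, f (X ω) ∂μ = ∑' k, f k * μ {ω | X ω = k} := by
  rw [← lintegral_map measurable_from_nat hX, lintegral_countable']
  congr 1 with k
  rw [Measure.map_apply hX (measurableSet_singleton k)]
  rfl

theorem measure_le_le_pow_mul_lintegral_inv_pow (hX : Measurable X) {θ : ℝ} (hθ0 : 0 < θ)
    (hθ1 : θ ≤ 1) (x : ℕ) :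
    μ {ω | x ≤ X ω} ≤ ENNReal.ofReal (θ ^ x) * ∫⁻ ω, ENNReal.ofReal (θ⁻¹ ^ X ω) ∂μ := by
  rw [← lintegral_const_mul' _ _ ENNReal.ofReal_ne_top,
    ← lintegral_indicator_one (measurableSet_le measurable_const hX)]
  refine lintegral_mono fun ω => ?_
  by_cases hω : x ≤ X ω
  · have hratio : 1 ≤ θ ^ x * θ⁻¹ ^ X ω := by
      rw [← Nat.add_sub_cancel' hω, pow_add, ← mul_assoc, ← mul_pow, mul_inv_cancel₀ hθ0.ne',
        one_pow, one_mul]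
      exact one_le_pow₀ ((one_le_inv₀ hθ0).2 hθ1)
    rw [Set.indicator_of_mem (show ω ∈ {a | x ≤ X a} from hω), Pi.one_apply,
      ← ENNReal.ofReal_mul (by positivity)]
    exact ENNReal.one_le_ofReal.2 hratio
  · simp [hω]

theorem lintegral_pow_of_geometric {q c : ℝ} (hq0 : 0 ≤ q) (hq1 : q ≤ 1) (hc : 0 ≤ c)
    (hcq : c * q < 1) (hX : Measurable X)
    (hlaw : ∀ k, μ {ω | X ω = k} = ENNReal.ofReal ((1 - q) * q ^ k)) :
    ∫⁻ ω, ENNReal.ofReal (c ^ X ω) ∂μ = ENNReal.ofReal ((1 - q) / (1 - c * q)) := by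
  have hterm : ∀ k : ℕ, c ^ k * ((1 - q) * q ^ k) = (1 - q) * (c * q) ^ k := fun k => by ring
  have hnonneg : ∀ k : ℕ, 0 ≤ (1 - q) * (c * q) ^ k := fun k => by
    have : 0 ≤ 1 - q := by linarith
    positivity
  rw [lintegral_comp_nat_eq_tsum hX (fun k => ENNReal.ofReal (c ^ k))]
  simp_rw [hlaw, ← ENNReal.ofReal_mul (pow_nonneg hc _), hterm]
  rw [← ENNReal.ofReal_tsum_of_nonneg hnonneg
      ((summable_geometric_of_lt_one (by positivity) hcq).mul_left _),
    tsum_mul_left, tsum_geometric_of_lt_one (by positivity) hcq, div_eq_mul_inv]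

theorem lintegral_pow_sum_eq_prod_of_iIndepFun {ι : Type*} (s : Finset ι) {X : ι → Ω → ℕ}
    (hX : ∀ i, Measurable (X i)) (hind : iIndepFun X μ) {c : ℝ} (hc : 0 ≤ c) :
    ∫⁻ ω, ENNReal.ofReal (c ^ ∑ i ∈ s, X i ω) ∂μ =
      ∏ i ∈ s, ∫⁻ ω, ENNReal.ofReal (c ^ X i ω) ∂μ := by
  simp_rw [← Finset.prod_pow_eq_pow_sum, ENNReal.ofReal_prod_of_nonneg fun i _ => pow_nonneg hc _]
  exact lintegral_prod_eq_prod_lintegral_of_indepFun s _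
    (hind.comp (fun _ n => ENNReal.ofReal (c ^ n)) fun _ => measurable_from_nat)
    fun i => (measurable_from_nat (f := fun n => ENNReal.ofReal (c ^ n))).comp (hX i)

theorem lintegral_inv_pow_sum_le_prod_one_add_of_geometric {ι : Type*} (t : Finset ι)
    {X : ι → Ω → ℕ} {q : ι → ℝ} {θ : ℝ} (hX : ∀ i, Measurable (X i)) (hind : iIndepFun X μ)
    (hlaw : ∀ i k, μ {ω | X i ω = k} = ENNReal.ofReal ((1 - q i) * q i ^ k))
    (hθ0 : 0 < θ) (hθ1 : θ < 1) (hq0 : ∀ i, 0 ≤ q i) (hq : ∀ i, q i ≤ 2 * θ - 1) :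
    ∫⁻ ω, ENNReal.ofReal (θ⁻¹ ^ ∑ i ∈ t, X i ω) ∂μ ≤ ENNReal.ofReal (∏ i ∈ t, (1 + q i)) := by
  have hqθ : ∀ i, q i < θ := fun i => by linarith [hq i]
  have hfactor : ∀ i, 0 ≤ (1 - q i) / (1 - θ⁻¹ * q i) := fun i =>
    div_nonneg (by linarith [hqθ i]) (sub_nonneg.2 ((inv_mul_le_one₀ hθ0).2 (hqθ i).le))
  rw [lintegral_pow_sum_eq_prod_of_iIndepFun t hX hind (inv_nonneg.2 hθ0.le),
    Finset.prod_congr rfl fun i _ => lintegral_pow_of_geometric (hq0 i) (by linarith [hqθ i])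
      (inv_nonneg.2 hθ0.le) ((inv_mul_lt_one₀ hθ0).2 (hqθ i)) (hX i) (hlaw i),
    ← ENNReal.ofReal_prod_of_nonneg fun i _ => hfactor i]
  exact ENNReal.ofReal_le_ofReal <| Finset.prod_le_prod (fun i _ => hfactor i) fun i _ =>
    one_sub_div_one_sub_inv_mul_le_one_add (hq0 i) (hqθ i) (hq i)

end GeneratingFunction

theorem prod_one_add_le_exp_div_one_sub {J : ℕ} {q : Fin J → ℝ} {s δ : ℝ} (hs : 0 ≤ s)
    (hδ0 : 0 ≤ δ) (hδ1 : δ < 1) (hq0 : ∀ j, 0 ≤ q j) (hq : ∀ j, q j ≤ s * δ ^ (j : ℕ)) :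
    ∏ j, (1 + q j) ≤ Real.exp (s / (1 - δ)) := by
  refine (Real.prod_one_add_le_exp_sum _ hq0).trans (Real.exp_le_exp.2 ?_)
  calc ∑ j, q j ≤ ∑ j : Fin J, s * δ ^ (j : ℕ) := Finset.sum_le_sum fun j _ => hq j
    _ = s * ∑ j ∈ Finset.range J, δ ^ j := by
      rw [Finset.mul_sum, Fin.sum_univ_eq_sum_range (fun j => s * δ ^ j)]
    _ ≤ s * (δ ^ 0 / (1 - δ)) := by
      gcongr
      rw [Finset.range_eq_Ico]
      exact geom_sum_Ico_le_of_lt_one hδ0 hδ1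
    _ = s / (1 - δ) := by ring

theorem tail_bound_dominated_sum_geometric (ε δ s : ℝ)
    (hε : ε ∈ Set.Ioo (0 : ℝ) 1) (hδ : δ ∈ Set.Ioo (0 : ℝ) 1) (hs : 0 < s) :
    ∃ A α : ℝ, 0 < A ∧ 0 < α ∧
      ∀ (J : ℕ) (Ω : Type) (_ : MeasurableSpace Ω) (μ : Measure Ω),
        IsProbabilityMeasure μ →
        ∀ (Gs : Fin J → Ω → ℕ) (G : Ω → ℕ),
          (∀ j, Measurable (Gs j)) → Measurable G →
          (∀ (j : Fin J) (k : ℕ), μ {ω | Gs j ω = k} =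
            ENNReal.ofReal ((1 - min (1 - ε) (s * δ ^ (j : ℕ))) *
              (min (1 - ε) (s * δ ^ (j : ℕ))) ^ k)) →
          iIndepFun Gs μ →
          (∀ x : ℕ, μ {ω | x ≤ G ω} ≤ μ {ω | x ≤ ∑ j, Gs j ω}) →
          ∀ r : ℕ, 0 < r → μ {ω | r < G ω} ≤ ENNReal.ofReal (A * Real.exp (-α * r)) := by
  obtain ⟨hε0, hε1⟩ := hε
  obtain ⟨hδ0, hδ1⟩ := hδ
  set θ : ℝ := 1 - ε / 2 with hθ
  have hθ0 : 0 < θ := by linarith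
  refine ⟨Real.exp (s / (1 - δ)), -Real.log θ, Real.exp_pos _,
    neg_pos.2 (Real.log_neg hθ0 (by linarith)), ?_⟩
  intro J Ω _ μ _ Gs G hGs _ hlaw hind hdom r _
  set q : Fin J → ℝ := fun j => min (1 - ε) (s * δ ^ (j : ℕ))
  have hq0 : ∀ j, 0 ≤ q j := fun j => le_min (by linarith) (by positivity)
  have hpgf : ∫⁻ ω, ENNReal.ofReal (θ⁻¹ ^ ∑ j, Gs j ω) ∂μ ≤
      ENNReal.ofReal (Real.exp (s / (1 - δ))) :=
    (lintegral_inv_pow_sum_le_prod_one_add_of_geometric _ hGs hind hlaw hθ0 (by linarith) hq0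
      fun j => by linarith [min_le_left (1 - ε) (s * δ ^ (j : ℕ))]).trans <|
    ENNReal.ofReal_le_ofReal <|
      prod_one_add_le_exp_div_one_sub hs.le hδ0.le hδ1 hq0 fun j => min_le_right _ _
  have hexp : Real.exp (-(-Real.log θ) * r) = θ ^ r := by
    rw [neg_neg, mul_comm, Real.exp_nat_mul, Real.exp_log hθ0]
  calc μ {ω | r < G ω} ≤ μ {ω | r ≤ G ω} := measure_mono fun ω (h : r < G ω) => h.le
    _ ≤ μ {ω | r ≤ ∑ j, Gs j ω} := hdom r
    _ ≤ ENNReal.ofReal (θ ^ r) * ∫⁻ ω, ENNReal.ofReal (θ⁻¹ ^ ∑ j, Gs j ω) ∂μ :=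
      measure_le_le_pow_mul_lintegral_inv_pow (Finset.measurable_sum _ fun j _ => hGs j) hθ0
        (by linarith) r
    _ ≤ ENNReal.ofReal (θ ^ r) * ENNReal.ofReal (Real.exp (s / (1 - δ))) := by gcongr
    _ = ENNReal.ofReal (Real.exp (s / (1 - δ)) * Real.exp (-(-Real.log θ) * r)) := by
      rw [hexp, ← ENNReal.ofReal_mul (by positivity), mul_comm]
end
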